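/- arXiv:1907.07297 — 11 statements merged into one kernel-verified Lean document; each statement's English description precedes it below -/
import Mathlib

section
/- Let p be a prime, R a commutative ring of characteristic p, and 𝔞 an ideal of R generated by r ≥ 1 elements. Let e ≥ 1 be an integer and λ a real number with λ ≥ r. Then C^e·𝔞^{⌈λp^e⌉} = 𝔞 · (C^e·𝔞^{⌈(λ−1)p^e⌉}), where ⌈·⌉ denotes the ceiling. (Skoda's theorem for Cartier ideals, Proposition 2.5(a).) -/
open Pointwise

/-- A `p^{-e}`-linear map on `R`: an additive map `φ : R → R` with
`φ (r^{p^e} * x) = r * φ x`. -/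
def IsCartierLinear (p e : ℕ) {R : Type*} [CommRing R] (φ : R →+ R) : Prop :=
  ∀ r x : R, φ (r ^ p ^ e * x) = r * φ x

/-- `C^e · I`: the ideal generated by all `φ x` with `φ` a `p^{-e}`-linear map and `x ∈ I`. -/
def cartierIdeal (p e : ℕ) {R : Type*} [CommRing R] (I : Ideal R) : Ideal R :=
  Ideal.span {y | ∃ φ : R →+ R, IsCartierLinear p e φ ∧ ∃ x ∈ I, φ x = y}


lemma prod_mem_pow_card' {R : Type*} [CommRing R] (I : Ideal R) {α : Type*} [DecidableEq α]
    (s : Finset α) (g : α → R) (hg : ∀ a ∈ s, g a ∈ I) : (∏ a ∈ s, g a) ∈ I ^ s.card := by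
  induction s using Finset.induction with
  | empty => simp [Ideal.one_eq_top]
  | @insert a s ha ih =>
    rw [Finset.prod_insert ha, Finset.card_insert_of_notMem ha, pow_succ, mul_comm (I ^ _) I]
    exact Ideal.mul_mem_mul (hg a (Finset.mem_insert_self a s))
      (ih fun b hb => hg b (Finset.mem_insert_of_mem hb))

lemma key_lemma {R : Type*} [CommRing R] {r : ℕ} (hr : 1 ≤ r) (f : Fin r → R) (q : ℕ) :
    Ideal.span (Set.range f) ^ (r * q) ≤
      Ideal.span (Set.range fun i => f i ^ q) * Ideal.span (Set.range f) ^ (r * q - q) := by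
  classical
  rw [Ideal.span, Submodule.span_pow]
  rw [show Submodule.span R (Set.range f ^ (r * q)) = Ideal.span (Set.range f ^ (r * q)) from rfl, Ideal.span_le]
  intro x hx
  obtain ⟨g, hg⟩ := Set.mem_pow.mp hx
  rw [List.prod_ofFn] at hg
  choose ι hι using fun j => (g j).2
  have : Nonempty (Fin r) := ⟨⟨0, hr⟩⟩
  obtain ⟨i, -, hi⟩ := Finset.exists_le_card_fiber_of_mul_le_card_of_maps_to
    (s := (Finset.univ : Finset (Fin (r * q)))) (t := Finset.univ) (f := ι)
    (n := q) (fun a _ => Finset.mem_univ _) Finset.univ_nonempty (by simp)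
  set S : Finset (Fin (r * q)) := {x ∈ Finset.univ | ι x = i} with hS
  have hq : q ≤ S.card := hi
  have hcard : S.card ≤ r * q := le_trans (Finset.card_le_univ S) (by simp)
  have hsplit : (∏ j, (g j : R)) =
      (∏ j ∈ S, (g j : R)) * ∏ j ∈ Finset.univ.filter (fun j => ¬ ι j = i), (g j : R) :=
    (Finset.prod_filter_mul_prod_filter_not Finset.univ (fun j => ι j = i) _).symm
  have hSprod : (∏ j ∈ S, (g j : R)) = f i ^ q * f i ^ (S.card - q) := by
    rw [← pow_add]
    have : q + (S.card - q) = S.card := by omega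
    rw [this, ← Finset.prod_const]
    refine Finset.prod_congr rfl fun j hj => ?_
    have : ι j = i := by simpa [hS] using hj
    rw [← hι j, this]
  have hxeq : x = f i ^ q *
      (f i ^ (S.card - q) * ∏ j ∈ Finset.univ.filter (fun j => ¬ ι j = i), (g j : R)) := by
    rw [← hg, hsplit, hSprod]; ring
  have hfi : f i ∈ Ideal.span (Set.range f) := Ideal.subset_span ⟨i, rfl⟩
  have hrest : (f i ^ (S.card - q) * ∏ j ∈ Finset.univ.filter (fun j => ¬ ι j = i), (g j : R)) ∈
      Ideal.span (Set.range f) ^ (r * q - q) := by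
    have h1 : f i ^ (S.card - q) ∈ Ideal.span (Set.range f) ^ (S.card - q) :=
      Ideal.pow_mem_pow hfi _
    have h2 : (∏ j ∈ Finset.univ.filter (fun j => ¬ ι j = i), (g j : R)) ∈
        Ideal.span (Set.range f) ^ (Finset.univ.filter (fun j => ¬ ι j = i)).card :=
      prod_mem_pow_card' _ _ _ fun j _ => Ideal.subset_span ⟨ι j, by rw [hι j]⟩
    have hc : (Finset.univ.filter (fun j => ¬ ι j = i)).card = r * q - S.card := by
      have := Finset.card_filter_add_card_filter_not
        (s := (Finset.univ : Finset (Fin (r * q)))) (p := fun j => ι j = i)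
      simp only [Finset.card_univ, Fintype.card_fin] at this
      rw [hS]
      omega
    have := Ideal.mul_mem_mul h1 h2
    rw [← pow_add] at this
    have harith : S.card - q + (Finset.univ.filter (fun j => ¬ ι j = i)).card = r * q - q := by
      rw [hc]; omega
    rwa [harith] at this
  rw [hxeq]
  exact Ideal.mul_mem_mul (Ideal.subset_span ⟨i, rfl⟩) hrest

/-- Skoda's theorem for Cartier ideals (Proposition 2.5(a)). -/
theorem skoda_cartierIdeal (p : ℕ) (hp : p.Prime) (R : Type*) [CommRing R] [CharP R p]
    (r : ℕ) (hr : 1 ≤ r) (f : Fin r → R) (𝔞 : Ideal R)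
    (h𝔞 : 𝔞 = Ideal.span (Set.range f))
    (e : ℕ) (he : 1 ≤ e) (lam : ℝ) (hlam : (r : ℝ) ≤ lam) :
    cartierIdeal p e (𝔞 ^ ⌈lam * (p : ℝ) ^ e⌉₊) =
      𝔞 * cartierIdeal p e (𝔞 ^ ⌈(lam - 1) * (p : ℝ) ^ e⌉₊) := by
  set q : ℕ := p ^ e with hqdef
  set N : ℕ := ⌈lam * (p : ℝ) ^ e⌉₊ with hNdef
  set M : ℕ := ⌈(lam - 1) * (p : ℝ) ^ e⌉₊ with hMdef
  have hr1 : (1 : ℝ) ≤ lam := le_trans (by exact_mod_cast hr) hlam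
  have hlam1 : (0 : ℝ) ≤ lam - 1 := by linarith
  have hpe : ((p : ℝ)) ^ e = ((q : ℕ) : ℝ) := by rw [hqdef]; push_cast; ring
  have hNM : N = M + q := by
    rw [hNdef, hMdef, show lam * (p : ℝ) ^ e = (lam - 1) * (p : ℝ) ^ e + (q : ℕ) by
      rw [hpe]; ring]
    rw [Nat.ceil_add_natCast (mul_nonneg hlam1 (by positivity))]
  have hM : (r - 1) * q ≤ M := by
    have hcast : (((r - 1) * q : ℕ) : ℝ) ≤ (lam - 1) * (p : ℝ) ^ e := by
      rw [hpe]
      push_cast [Nat.cast_sub hr]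
      have hq0 : (0 : ℝ) ≤ (q : ℝ) := by positivity
      nlinarith
    have := Nat.ceil_mono hcast
    rwa [Nat.ceil_natCast] at this
  have hrqN : r * q ≤ N := by
    obtain ⟨r', rfl⟩ : ∃ r', r = r' + 1 := ⟨r - 1, by omega⟩
    simp only [Nat.add_sub_cancel] at hM
    rw [hNM, add_one_mul]
    omega
  have hqrq : q ≤ r * q := Nat.le_mul_of_pos_left q (by omega)
  -- the key inclusion for monomials
  have hkey : 𝔞 ^ N ≤ Ideal.span (Set.range fun i => f i ^ q) * 𝔞 ^ M := by
    have h1 : 𝔞 ^ N = 𝔞 ^ (N - r * q) * 𝔞 ^ (r * q) := by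
      rw [← pow_add]
      congr 1
      omega
    have h2 : 𝔞 ^ (r * q) ≤ Ideal.span (Set.range fun i => f i ^ q) * 𝔞 ^ (r * q - q) := by
      rw [h𝔞]; exact key_lemma hr f q
    calc 𝔞 ^ N = 𝔞 ^ (N - r * q) * 𝔞 ^ (r * q) := h1
      _ ≤ 𝔞 ^ (N - r * q) * (Ideal.span (Set.range fun i => f i ^ q) * 𝔞 ^ (r * q - q)) :=
          Ideal.mul_mono_right h2
      _ = Ideal.span (Set.range fun i => f i ^ q) * (𝔞 ^ (N - r * q) * 𝔞 ^ (r * q - q)) := by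
          ring
      _ = Ideal.span (Set.range fun i => f i ^ q) * 𝔞 ^ M := by
          rw [← pow_add]
          congr 2
          have h3 : N = M + q := hNM
          generalize hA : r * q = A at *
          omega
  apply le_antisymm
  · -- forward inclusion
    rw [cartierIdeal, Ideal.span_le]
    rintro y ⟨φ, hφ, x, hx, rfl⟩
    have hx' : x ∈ Ideal.span (Set.range fun i => f i ^ q) * 𝔞 ^ M := hkey hx
    refine Submodule.mul_induction_on hx' ?_ ?_
    · intro a ha b hb
      induction ha using Submodule.span_induction generalizing b with
      | mem a hmem =>
        obtain ⟨i, rfl⟩ := hmem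
        rw [hφ (f i) b]
        refine Ideal.mul_mem_mul ?_ (Ideal.subset_span ⟨φ, hφ, b, hb, rfl⟩)
        rw [h𝔞]; exact Ideal.subset_span ⟨i, rfl⟩
      | zero => simp
      | add x y hxm hym ihx ihy =>
        rw [add_mul, map_add]
        exact Ideal.add_mem _ (ihx b hb) (ihy b hb)
      | smul c x hxm ih =>
        have hcb : (c • x) * b = x * (c * b) := by rw [smul_eq_mul]; ring
        rw [hcb]
        exact ih (c * b) (Ideal.mul_mem_left _ _ hb)
    · intro x y hxm hym
      rw [map_add]
      exact Ideal.add_mem _ hxm hym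
  · -- reverse inclusion
    rw [Ideal.mul_le]
    intro a ha c hc
    induction hc using Submodule.span_induction with
    | mem c hmem =>
      obtain ⟨φ, hφ, x, hx, rfl⟩ := hmem
      rw [← hφ a x]
      refine Ideal.subset_span ⟨φ, hφ, a ^ q * x, ?_, rfl⟩
      have : a ^ q * x ∈ 𝔞 ^ q * 𝔞 ^ M := Ideal.mul_mem_mul (Ideal.pow_mem_pow ha q) hx
      rwa [← pow_add, show q + M = N by omega] at this
    | zero => simp
    | add x y hxm hym ihx ihy =>
      rw [mul_add]
      exact Ideal.add_mem _ ihx ihy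
    | smul d x hxm ih =>
      rw [smul_eq_mul, mul_left_comm]
      exact Ideal.mul_mem_left _ _ ih
end

section
/- Let p be a prime, R a commutative ring of characteristic p, and 𝔞 an ideal of R generated by r ≥ 1 elements. Then for every integer e ≥ 1 and every natural number s with s ≥ r·p^e one has 𝔞^s = 𝔞^{[p^e]} · 𝔞^{s−p^e}, where 𝔞^{[p^e]} denotes the ideal generated by {x^{p^e} : x ∈ 𝔞}. -/
/-- `J^{[q]}`: the ideal generated by `q`-th powers of elements of `J`. -/
def bracketPower {R : Type*} [CommRing R] (J : Ideal R) (q : ℕ) : Ideal R :=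
  Ideal.span ((fun x => x ^ q) '' (J : Set R))

/-!
`𝔞 ^ s` is spanned by the products of `s` of the `r` generators. Since `s ≥ r q`, by pigeonhole
one generator `f i` occurs at least `q` times in each such product, which therefore lies in
`(f i ^ q) * 𝔞 ^ (s - q)`. The reverse inclusion is just `𝔞^{[q]} ⊆ 𝔞 ^ q`.
-/

namespace Ideal

variable {R : Type*} [CommRing R]

theorem bracketPower_le_pow (J : Ideal R) (q : ℕ) : bracketPower J q ≤ J ^ q :=
  span_le.mpr <| by
    rintro _ ⟨x, hx, rfl⟩
    exact pow_mem_pow hx q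

theorem bracketPower_mul_pow_sub_le (J : Ideal R) {q s : ℕ} (hqs : q ≤ s) :
    bracketPower J q * J ^ (s - q) ≤ J ^ s :=
  calc bracketPower J q * J ^ (s - q) ≤ J ^ q * J ^ (s - q) :=
        mul_mono_left (bracketPower_le_pow J q)
    _ = J ^ s := by rw [← pow_add, Nat.add_sub_cancel' hqs]

theorem span_range_pow {ι : Type*} (f : ι → R) (n : ℕ) :
    span (Set.range f) ^ n = span (Set.range fun g : Fin n → ι => ∏ j, f (g j)) := by
  rw [span, Submodule.span_pow]
  congr 1
  ext x
  simp only [Set.mem_pow, List.prod_ofFn, Set.mem_range]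
  constructor
  · rintro ⟨g, rfl⟩
    exact ⟨fun j => (g j).2.choose, Finset.prod_congr rfl fun j _ => (g j).2.choose_spec⟩
  · rintro ⟨g, rfl⟩
    exact ⟨fun j => ⟨f (g j), g j, rfl⟩, rfl⟩

theorem prod_comp_mem_bracketPower_mul_pow {ι α : Type*} [Fintype ι] [Nonempty ι] [Fintype α]
    {J : Ideal R} {f : ι → R} (hf : ∀ i, f i ∈ J) (g : α → ι) {q : ℕ}
    (hq : Fintype.card ι * q ≤ Fintype.card α) :
    ∏ a, f (g a) ∈ bracketPower J q * J ^ (Fintype.card α - q) := by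
  classical
  obtain ⟨i, hi⟩ := Fintype.exists_le_card_fiber_of_mul_le_card (f := g) hq
  obtain ⟨T, hT, hTcard⟩ := Finset.exists_subset_card_eq hi
  have hprodT : ∏ a ∈ T, f (g a) = f i ^ q := by
    rw [Finset.prod_congr rfl fun a ha => by rw [(Finset.mem_filter.mp (hT ha)).2],
      Finset.prod_const, hTcard]
  have hprodTc : ∏ a ∈ Tᶜ, f (g a) ∈ J ^ (Fintype.card α - q) := by
    rw [← hTcard, ← Finset.card_compl, ← Finset.prod_const]
    exact prod_mem_prod fun a _ => hf (g a)
  rw [← Finset.prod_mul_prod_compl T, hprodT]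
  exact mul_mem_mul (subset_span ⟨f i, hf i, rfl⟩) hprodTc

theorem span_range_pow_eq_bracketPower_mul_pow {ι : Type*} [Fintype ι] [Nonempty ι] (f : ι → R)
    {q s : ℕ} (hs : Fintype.card ι * q ≤ s) :
    span (Set.range f) ^ s = bracketPower (span (Set.range f)) q * span (Set.range f) ^ (s - q) := by
  have hqs : q ≤ s := (Nat.le_mul_of_pos_left q Fintype.card_pos).trans hs
  refine le_antisymm ?_ (bracketPower_mul_pow_sub_le _ hqs)
  rw [span_range_pow, span_le]
  rintro _ ⟨g, rfl⟩
  simpa using prod_comp_mem_bracketPower_mul_pow (J := span (Set.range f))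
    (fun i => subset_span ⟨i, rfl⟩) g (by simpa using hs)

end Ideal

theorem pow_eq_bracketPower_mul_pow_general (p : ℕ) (R : Type*) [CommRing R]
    (r : ℕ) (hr : 1 ≤ r) (f : Fin r → R) (𝔞 : Ideal R)
    (h𝔞 : 𝔞 = Ideal.span (Set.range f))
    (e : ℕ) (s : ℕ) (hs : r * p ^ e ≤ s) :
    𝔞 ^ s = bracketPower 𝔞 (p ^ e) * 𝔞 ^ (s - p ^ e) := by
  have : Nonempty (Fin r) := Fin.pos_iff_nonempty.mp hr
  subst h𝔞
  exact Ideal.span_range_pow_eq_bracketPower_mul_pow f (by simpa using hs)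

theorem pow_eq_bracketPower_mul_pow (p : ℕ) (hp : p.Prime) (R : Type*) [CommRing R] [CharP R p]
    (r : ℕ) (hr : 1 ≤ r) (f : Fin r → R) (𝔞 : Ideal R)
    (h𝔞 : 𝔞 = Ideal.span (Set.range f))
    (e : ℕ) (he : 1 ≤ e) (s : ℕ) (hs : r * p ^ e ≤ s) :
    𝔞 ^ s = bracketPower 𝔞 (p ^ e) * 𝔞 ^ (s - p ^ e) :=
  pow_eq_bracketPower_mul_pow_general p R r hr f 𝔞 h𝔞 e s hs
end

section
/- Let p be a prime, e ≥ 1 an integer, and R a commutative ring of characteristic p such that F^e_*R (that is, R viewed as a module over itself via r • x = r^{p^e}·x) is a finitely generated free R-module. Then for all ideals I, J of R one has C^e·I ⊆ J if and only if I ⊆ J^{[p^e]}. (Lemma 2.3(b).) -/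
/-- `b` is a basis of `F^e_* R` over `R`. -/
def IsFrobeniusBasis (p e : ℕ) {R : Type*} [CommRing R] {n : ℕ} (b : Fin n → R) : Prop :=
  ∀ x : R, ∃! c : Fin n → R, x = ∑ i, c i ^ p ^ e * b i

section Cartier

variable {p e : ℕ} {R : Type*} [CommRing R]

theorem pow_mem_bracketPower {J : Ideal R} {x : R} (q : ℕ) (hx : x ∈ J) :
    x ^ q ∈ bracketPower J q :=
  Ideal.subset_span ⟨x, hx, rfl⟩

theorem IsCartierLinear.map_mem_of_mem_bracketPower {φ : R →+ R} (hφ : IsCartierLinear p e φ)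
    {J : Ideal R} {z : R} (hz : z ∈ bracketPower J (p ^ e)) : φ z ∈ J := by
  suffices ∀ r : R, φ (r * z) ∈ J by simpa using this 1
  induction hz using Submodule.span_induction with
  | mem _ hj =>
    obtain ⟨j, hj, rfl⟩ := hj
    intro r
    rw [mul_comm, hφ]
    exact J.mul_mem_right _ hj
  | zero => simp
  | add _ _ _ _ hx hy =>
    intro r
    rw [mul_add, map_add]
    exact J.add_mem (hx r) (hy r)
  | smul s _ _ hx =>
    intro r
    rw [smul_eq_mul, ← mul_assoc]
    exact hx (r * s)

theorem cartierIdeal_le_of_le_bracketPower {I J : Ideal R} (h : I ≤ bracketPower J (p ^ e)) :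
    cartierIdeal p e I ≤ J := by
  rw [cartierIdeal, Ideal.span_le]
  rintro _ ⟨φ, hφ, x, hx, rfl⟩
  exact hφ.map_mem_of_mem_bracketPower (h hx)

end Cartier

namespace IsFrobeniusBasis

variable {p e : ℕ} {R : Type*} [CommRing R] {n : ℕ} {b : Fin n → R}

noncomputable def coord (hb : IsFrobeniusBasis p e b) (x : R) : Fin n → R :=
  (hb x).choose

theorem eq_sum_coord (hb : IsFrobeniusBasis p e b) (x : R) :
    x = ∑ i, hb.coord x i ^ p ^ e * b i :=
  (hb x).choose_spec.1

theorem coord_eq_of_eq_sum (hb : IsFrobeniusBasis p e b) {x : R} {c : Fin n → R}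
    (h : x = ∑ i, c i ^ p ^ e * b i) : hb.coord x = c :=
  ((hb x).choose_spec.2 c h).symm

theorem coord_pow_mul (hb : IsFrobeniusBasis p e b) (r x : R) :
    hb.coord (r ^ p ^ e * x) = r • hb.coord x := by
  refine hb.coord_eq_of_eq_sum ?_
  conv_lhs => rw [hb.eq_sum_coord x]
  simp only [Finset.mul_sum, Pi.smul_apply, smul_eq_mul, mul_pow, mul_assoc]

variable [Fact p.Prime] [CharP R p]

theorem coord_add (hb : IsFrobeniusBasis p e b) (x y : R) :
    hb.coord (x + y) = hb.coord x + hb.coord y := by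
  refine hb.coord_eq_of_eq_sum ?_
  conv_lhs => rw [hb.eq_sum_coord x, hb.eq_sum_coord y]
  simp only [← Finset.sum_add_distrib, Pi.add_apply, add_pow_char_pow, add_mul]

noncomputable def coordHom (hb : IsFrobeniusBasis p e b) (i : Fin n) : R →+ R :=
  AddMonoidHom.mk' (fun x => hb.coord x i) fun x y => congrFun (hb.coord_add x y) i

theorem isCartierLinear_coordHom (hb : IsFrobeniusBasis p e b) (i : Fin n) :
    IsCartierLinear p e (hb.coordHom i) :=
  fun r x => congrFun (hb.coord_pow_mul r x) i

theorem coord_mem_cartierIdeal (hb : IsFrobeniusBasis p e b) {I : Ideal R} {x : R} (hx : x ∈ I)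
    (i : Fin n) : hb.coord x i ∈ cartierIdeal p e I :=
  Ideal.subset_span ⟨hb.coordHom i, hb.isCartierLinear_coordHom i, x, hx, rfl⟩

theorem le_bracketPower_of_cartierIdeal_le (hb : IsFrobeniusBasis p e b) {I J : Ideal R}
    (h : cartierIdeal p e I ≤ J) : I ≤ bracketPower J (p ^ e) := by
  intro x hx
  rw [hb.eq_sum_coord x]
  exact Ideal.sum_mem _ fun i _ =>
    Ideal.mul_mem_right _ _ (pow_mem_bracketPower _ (h (hb.coord_mem_cartierIdeal hx i)))

end IsFrobeniusBasis

theorem cartierIdeal_le_iff_general (p : ℕ) (hp : p.Prime)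
    (e : ℕ) (R : Type*) [CommRing R] [CharP R p]
    (hfree : ∃ n : ℕ, ∃ b : Fin n → R, ∀ x : R, ∃! c : Fin n → R,
      x = ∑ i, c i ^ p ^ e * b i)
    (I J : Ideal R) :
    cartierIdeal p e I ≤ J ↔ I ≤ bracketPower J (p ^ e) := by
  have : Fact p.Prime := ⟨hp⟩
  obtain ⟨n, b, hb⟩ := hfree
  exact ⟨IsFrobeniusBasis.le_bracketPower_of_cartierIdeal_le hb,
    cartierIdeal_le_of_le_bracketPower⟩

/-- Lemma 2.3(b): if `F^e_* R` is a finitely generated free `R`-module, then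
`C^e · I ⊆ J` iff `I ⊆ J^{[p^e]}`. -/
theorem cartierIdeal_le_iff (p : ℕ) (hp : p.Prime)
    (e : ℕ) (he : 1 ≤ e) (R : Type*) [CommRing R] [CharP R p]
    (hfree : ∃ n : ℕ, ∃ b : Fin n → R, ∀ x : R, ∃! c : Fin n → R,
      x = ∑ i, c i ^ p ^ e * b i)
    (I J : Ideal R) :
    cartierIdeal p e I ≤ J ↔ I ≤ bracketPower J (p ^ e) :=
  cartierIdeal_le_iff_general p hp e R hfree I J
end

section
/- Let p be a prime, e ≥ 1 an integer, and R a commutative ring of characteristic p such that F^e_*R (that is, R viewed as a module over itself via r • x = r^{p^e}·x) is a finitely generated free R-module and such that there exists a p^{-e}-linear map φ on R with φ(1) = 1. Let 𝔞 be a nonzero ideal of R generated by r elements. If n ≥ r·p^e is a ν-invariant of level e for 𝔞, then n − p^e is also a ν-invariant of level e for 𝔞. (Corollary 4.3.) -/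
open Pointwise


/-- `n` is a ν-invariant of level `e` for `𝔞`: there is a proper ideal `J` whose radical
contains `𝔞` such that `n` is the largest natural number with `𝔞^n ⊄ J^{[p^e]}`. -/
def IsNuInvariant (p e : ℕ) {R : Type*} [CommRing R] (𝔞 : Ideal R) (n : ℕ) : Prop :=
  ∃ J : Ideal R, J ≠ ⊤ ∧ 𝔞 ≤ J.radical ∧ ¬ 𝔞 ^ n ≤ bracketPower J (p ^ e) ∧
    ∀ m : ℕ, ¬ 𝔞 ^ m ≤ bracketPower J (p ^ e) → m ≤ n

section Aux

variable {p e : ℕ} [Fact p.Prime] {R : Type*} [CommRing R] [CharP R p]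
variable {N : ℕ} {b : Fin N → R}

/-- Membership in a bracket power, characterized via coefficients in a Frobenius basis. -/
lemma mem_bracketPower_iff_exists
    (hb : ∀ x : R, ∃! c : Fin N → R, x = ∑ i, c i ^ p ^ e * b i) (J : Ideal R) (z : R) :
    z ∈ bracketPower J (p ^ e) ↔
      ∃ c : Fin N → R, (∀ i, c i ∈ J) ∧ z = ∑ i, c i ^ p ^ e * b i := by
  have hp : p.Prime := Fact.out
  constructor
  · intro hz
    induction hz using Submodule.span_induction with
    | mem x hx =>
      obtain ⟨y, hyJ, rfl⟩ := hx
      obtain ⟨u, hu, -⟩ := hb 1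
      refine ⟨fun i => y * u i, fun i => J.mul_mem_right _ hyJ, ?_⟩
      calc y ^ p ^ e = y ^ p ^ e * 1 := (mul_one _).symm
        _ = y ^ p ^ e * ∑ i, u i ^ p ^ e * b i := by rw [← hu]
        _ = ∑ i, (y * u i) ^ p ^ e * b i := by
            rw [Finset.mul_sum]; refine Finset.sum_congr rfl fun i _ => ?_; ring
    | zero =>
      refine ⟨0, fun i => J.zero_mem, ?_⟩
      simp [zero_pow (pow_ne_zero e hp.ne_zero)]
    | add x y hx hy ihx ihy =>
      obtain ⟨c, hc, rfl⟩ := ihx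
      obtain ⟨d, hd, rfl⟩ := ihy
      refine ⟨c + d, fun i => J.add_mem (hc i) (hd i), ?_⟩
      rw [← Finset.sum_add_distrib]
      refine Finset.sum_congr rfl fun i _ => ?_
      rw [Pi.add_apply, add_pow_char_pow, add_mul]
    | smul a x hx ihx =>
      obtain ⟨c, hc, rfl⟩ := ihx
      choose d hd using fun i => (hb (a * b i)).exists
      refine ⟨fun j => ∑ i, c i * d i j, fun j => Ideal.sum_mem _ fun i _ =>
        J.mul_mem_right _ (hc i), ?_⟩
      calc a • ∑ i, c i ^ p ^ e * b i = ∑ i, c i ^ p ^ e * (a * b i) := by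
            rw [smul_eq_mul, Finset.mul_sum]
            exact Finset.sum_congr rfl fun i _ => by ring
        _ = ∑ i, ∑ j, (c i * d i j) ^ p ^ e * b j := by
            refine Finset.sum_congr rfl fun i _ => ?_
            rw [hd i, Finset.mul_sum]
            exact Finset.sum_congr rfl fun j _ => by rw [mul_pow]; ring
        _ = ∑ j, (∑ i, c i * d i j) ^ p ^ e * b j := by
            rw [Finset.sum_comm]
            refine Finset.sum_congr rfl fun j _ => ?_
            rw [sum_pow_char_pow, Finset.sum_mul]
  · rintro ⟨c, hc, rfl⟩
    exact Ideal.sum_mem _ fun i _ =>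
      Ideal.mul_mem_right _ _ (Ideal.subset_span ⟨c i, hc i, rfl⟩)

/-- The key colon identity: `z·f^{p^e} ∈ J^{[p^e]}` iff `z ∈ (J : f)^{[p^e]}`. -/
lemma mul_pow_mem_bracketPower_iff
    (hb : ∀ x : R, ∃! c : Fin N → R, x = ∑ i, c i ^ p ^ e * b i) (J : Ideal R) (g z : R) :
    z * g ^ p ^ e ∈ bracketPower J (p ^ e) ↔
      z ∈ bracketPower (J.colon (Ideal.span {g})) (p ^ e) := by
  rw [mem_bracketPower_iff_exists hb, mem_bracketPower_iff_exists hb]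
  constructor
  · rintro ⟨d, hd, hzd⟩
    obtain ⟨c, hc, -⟩ := hb z
    have hzg : z * g ^ p ^ e = ∑ i, (c i * g) ^ p ^ e * b i := by
      rw [hc, Finset.sum_mul]
      exact Finset.sum_congr rfl fun i _ => by rw [mul_pow]; ring
    have : (fun i => c i * g) = d := (hb (z * g ^ p ^ e)).unique hzg hzd
    refine ⟨c, fun i => ?_, hc⟩
    rw [Ideal.mem_colon_span_singleton]
    have := congrFun this i
    rw [this]
    exact hd i
  · rintro ⟨c, hc, rfl⟩
    refine ⟨fun i => c i * g, fun i => Ideal.mem_colon_span_singleton.mp (hc i), ?_⟩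
    rw [Finset.sum_mul]
    exact Finset.sum_congr rfl fun i _ => by rw [mul_pow]; ring

end Aux

lemma span_set_pow {R : Type*} [CommRing R] (s : Set R) (n : ℕ) :
    Ideal.span s ^ n = Ideal.span (s ^ n) := by
  induction n with
  | zero =>
    rw [pow_zero, pow_zero, Ideal.one_eq_top]
    exact (Ideal.span_one).symm
  | succ n ih =>
    rw [pow_succ, ih, Ideal.span_mul_span']
    congr 1

lemma prod_mem_pow_card {R : Type*} [CommRing R] {ι : Type*} (I : Ideal R) (T : Finset ι)
    (u : ι → R) (h : ∀ j ∈ T, u j ∈ I) : ∏ j ∈ T, u j ∈ I ^ T.card := by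
  classical
  induction T using Finset.cons_induction with
  | empty => simp [Ideal.one_eq_top]
  | cons a T ha ih =>
    rw [Finset.prod_cons, Finset.card_cons, pow_succ, mul_comm (I ^ T.card) I]
    exact Ideal.mul_mem_mul (h a (Finset.mem_cons_self _ _))
      (ih fun j hj => h j (Finset.mem_cons_of_mem hj))

/-- Corollary 4.3: if `n ≥ r·p^e` is a ν-invariant of level `e`, so is `n - p^e`. -/
theorem isNuInvariant_sub (p : ℕ) (hp : p.Prime)
    (e : ℕ) (he : 1 ≤ e) (R : Type*) [CommRing R] [CharP R p]
    (hfree : ∃ n : ℕ, ∃ b : Fin n → R, ∀ x : R, ∃! c : Fin n → R,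
      x = ∑ i, c i ^ p ^ e * b i)
    (hsplit : ∃ φ : R →+ R, IsCartierLinear p e φ ∧ φ 1 = 1)
    (r : ℕ) (f : Fin r → R) (𝔞 : Ideal R) (h𝔞 : 𝔞 = Ideal.span (Set.range f))
    (h𝔞ne : 𝔞 ≠ 0)
    (n : ℕ) (hn : r * p ^ e ≤ n) (hnu : IsNuInvariant p e 𝔞 n) :
    IsNuInvariant p e 𝔞 (n - p ^ e) := by
  classical
  haveI : Fact p.Prime := ⟨hp⟩
  obtain ⟨N, b, hb⟩ := hfree
  obtain ⟨J, hJtop, hJrad, hJn, hJmax⟩ := hnu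
  have hq1 : 1 ≤ p ^ e := Nat.one_le_pow _ _ hp.pos
  have hr : 1 ≤ r := by
    by_contra hr
    have : r = 0 := by omega
    subst this
    apply h𝔞ne
    rw [h𝔞, Set.range_eq_empty, Ideal.span_empty]
    rfl
  have hqn : p ^ e ≤ n := le_trans (Nat.le_mul_of_pos_left (p ^ e) hr) hn
  -- find a monomial of degree n not in J^{[(p ^ e)]}
  have hmono : ∃ g : Fin n → Fin r, (∏ j, f (g j)) ∉ bracketPower J (p ^ e) := by
    by_contra hcon
    push_neg at hcon
    apply hJn
    rw [h𝔞, span_set_pow, Ideal.span_le]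
    intro x hx
    rw [Set.mem_pow] at hx
    obtain ⟨F, hF⟩ := hx
    choose g hg using fun j => (F j).2
    have : (List.ofFn fun j => ((F j : R))).prod = ∏ j, f (g j) := by
      rw [List.prod_ofFn]
      exact Finset.prod_congr rfl fun j _ => (hg j).symm
    rw [← hF, this]
    exact hcon g
  obtain ⟨g, hg⟩ := hmono
  -- pigeonhole: some index occurs at least (p ^ e) times
  have hpigeon : ∃ i : Fin r, (p ^ e) ≤ (Finset.univ.filter fun j => g j = i).card := by
    by_contra hcon
    push_neg at hcon
    have hsum : (Finset.univ : Finset (Fin n)).card =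
        ∑ i : Fin r, (Finset.univ.filter fun j => g j = i).card :=
      Finset.card_eq_sum_card_fiberwise fun j _ => Finset.mem_univ (g j)
    have h1 : ∑ i : Fin r, (Finset.univ.filter fun j => g j = i).card ≤
        ∑ _i : Fin r, ((p ^ e) - 1) :=
      Finset.sum_le_sum fun i _ => by have := hcon i; omega
    simp only [Finset.card_univ, Fintype.card_fin, Finset.sum_const,
      Finset.card_univ, smul_eq_mul] at hsum h1
    have hmul : r * (p ^ e - 1) + r * 1 = r * p ^ e := by
      rw [← Nat.mul_add]
      congr 1
      omega
    omega
  obtain ⟨i0, hi0⟩ := hpigeon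
  obtain ⟨T', hT'sub, hT'card⟩ :=
    Finset.exists_subset_card_eq (s := Finset.univ.filter fun j => g j = i0) (n := p ^ e) hi0
  -- split the monomial as f i0 ^ (p ^ e) * y with y ∈ 𝔞 ^ (n - (p ^ e))
  set y : R := ∏ j ∈ Finset.univ \ T', f (g j) with hydef
  have hprodsplit : (∏ j, f (g j)) = y * f i0 ^ (p ^ e) := by
    have h1 : ∏ j ∈ T', f (g j) = f i0 ^ (p ^ e) := by
      have : ∀ j ∈ T', f (g j) = f i0 := fun j hj => by
        have := hT'sub hj
        rw [Finset.mem_filter] at this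
        rw [this.2]
      rw [Finset.prod_congr rfl this, Finset.prod_const, hT'card]
    rw [← h1, hydef, Finset.prod_sdiff (Finset.subset_univ T')]
  have hy : y ∈ 𝔞 ^ (n - (p ^ e)) := by
    have hcard : (Finset.univ \ T').card = n - (p ^ e) := by
      rw [Finset.card_sdiff_of_subset (Finset.subset_univ T'), hT'card, Finset.card_univ,
        Fintype.card_fin]
    rw [hydef, ← hcard]
    exact prod_mem_pow_card 𝔞 _ _ fun j _ => by
      rw [h𝔞]; exact Ideal.subset_span (Set.mem_range_self (g j))
  -- the new ideal
  refine ⟨J.colon (Ideal.span {f i0}), ?_, ?_, ?_, ?_⟩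
  · -- properness
    intro htop
    have hfJ : f i0 ∈ J := by
      have : (1 : R) ∈ J.colon (Ideal.span {f i0}) := htop ▸ Submodule.mem_top
      rw [Ideal.mem_colon_span_singleton, one_mul] at this
      exact this
    apply hg
    rw [hprodsplit]
    exact Ideal.mul_mem_left _ y
      (Ideal.subset_span ⟨f i0, hfJ, rfl⟩)
  · -- radical
    refine le_trans hJrad (Ideal.radical_mono fun x hx => ?_)
    rw [Ideal.mem_colon_span_singleton]
    exact J.mul_mem_right _ hx
  · -- 𝔞 ^ (n - (p ^ e)) not contained
    intro hle
    apply hg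
    rw [hprodsplit, mul_pow_mem_bracketPower_iff hb]
    exact hle hy
  · -- maximality
    intro m hm
    by_contra hmn
    push_neg at hmn
    apply hm
    have h1 : 𝔞 ^ m ≤ 𝔞 ^ (n - (p ^ e) + 1) := Ideal.pow_le_pow_right (by omega)
    refine le_trans h1 fun z hz => ?_
    rw [← mul_pow_mem_bracketPower_iff hb]
    have hfq : f i0 ^ (p ^ e) ∈ 𝔞 ^ (p ^ e) := by
      refine Ideal.pow_mem_pow ?_ (p ^ e)
      rw [h𝔞]; exact Ideal.subset_span (Set.mem_range_self i0)
    have hmem : z * f i0 ^ (p ^ e) ∈ 𝔞 ^ (n + 1) := by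
      have : 𝔞 ^ (n - (p ^ e) + 1) * 𝔞 ^ (p ^ e) = 𝔞 ^ (n + 1) := by
        rw [← pow_add]; congr 1; omega
      rw [← this]
      exact Ideal.mul_mem_mul hz hfq
    have hsub : 𝔞 ^ (n + 1) ≤ bracketPower J (p ^ e) := by
      by_contra hcon
      exact absurd (hJmax _ hcon) (by omega)
    exact hsub hmem
end

section
/- Let r ≥ 1 and m ≥ 0 be integers and let k = (k_1, …, k_r) be an r-tuple of natural numbers. Then the sum, over all r-tuples a = (a_1, …, a_r) of natural numbers with a_1 + ⋯ + a_r = m, of the products ∏_{j=1}^r C(k_j + a_j, a_j) of binomial coefficients, equals C(k_1 + ⋯ + k_r + r + m − 1, m). (This is the combinatorial identity underlying Proposition 3.1(c): the operator s_m acts on the monomial t^k by the scalar (−1)^m·C(|k| + r + m − 1, m).) -/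
open PowerSeries in
lemma vand (x y m : ℕ) :
    ∑ p ∈ Finset.HasAntidiagonal.antidiagonal m, (x + p.1).choose x * (y + p.2).choose y
      = (x + y + 1 + m).choose (x + y + 1) := by
  have h := congrArg (PowerSeries.coeff m)
    (pow_add (PowerSeries.mk 1 : ℤ⟦X⟧) (x + 1) (y + 1))
  rw [show x + 1 + (y + 1) = (x + y + 1) + 1 by ring] at h
  rw [mk_one_pow_eq_mk_choose_add, mk_one_pow_eq_mk_choose_add,
    mk_one_pow_eq_mk_choose_add, coeff_mk, coeff_mul] at h
  simp_rw [coeff_mk] at h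
  exact_mod_cast h.symm

lemma sum_tuple_succ {M : Type*} [AddCommMonoid M] (r m : ℕ) (f : (Fin (r + 1) → ℕ) → M) :
    ∑ a ∈ Finset.Nat.antidiagonalTuple (r + 1) m, f a
      = ∑ p ∈ Finset.HasAntidiagonal.antidiagonal m, ∑ b ∈ Finset.Nat.antidiagonalTuple r p.2,
          f (Fin.cons p.1 b) := by
  rw [Finset.sum_sigma']
  refine Finset.sum_nbij' (fun (a : Fin (r+1) → ℕ) => ((⟨(a 0, ∑ j, a (Fin.succ j)), Fin.tail a⟩ : (_ : ℕ × ℕ) × (Fin r → ℕ))))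
    (fun x => Fin.cons x.1.1 x.2) ?_ ?_ ?_ ?_ ?_
  · intro a ha
    simp only [Finset.Nat.mem_antidiagonalTuple, Finset.mem_sigma,
      Finset.HasAntidiagonal.mem_antidiagonal] at ha ⊢
    refine ⟨?_, rfl⟩
    rw [← ha, Fin.sum_univ_succ]
  · rintro ⟨⟨p1, p2⟩, b⟩ h
    simp only [Finset.mem_sigma, Finset.HasAntidiagonal.mem_antidiagonal,
      Finset.Nat.mem_antidiagonalTuple] at h ⊢
    rw [Fin.sum_univ_succ]
    simp [h.2, h.1]
  · intro a ha
    simp [Fin.cons_self_tail]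
  · rintro ⟨⟨p1, p2⟩, b⟩ h
    simp only [Finset.mem_sigma, Finset.HasAntidiagonal.mem_antidiagonal,
      Finset.Nat.mem_antidiagonalTuple] at h
    simp [Fin.tail_cons, h.2]
  · intro a ha
    simp [Fin.cons_self_tail]

/-- The combinatorial identity underlying Proposition 3.1(c):
`∑_{|a| = m} ∏_j C(k_j + a_j, a_j) = C(|k| + r + m - 1, m)`. -/
theorem sum_prod_choose (r m : ℕ) (hr : 1 ≤ r) (k : Fin r → ℕ) :
    ∑ a ∈ Finset.Nat.antidiagonalTuple r m, ∏ j, Nat.choose (k j + a j) (a j)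
      = Nat.choose ((∑ j, k j) + r + m - 1) m := by
  induction r generalizing m with
  | zero => omega
  | succ r ih =>
    rcases Nat.eq_zero_or_pos r with rfl | hr'
    · simp [Fin.sum_univ_one, Nat.choose_symm_add]
    rw [sum_tuple_succ]
    have key : ∀ p ∈ Finset.HasAntidiagonal.antidiagonal m,
        ∑ b ∈ Finset.Nat.antidiagonalTuple r p.2,
          ∏ j, Nat.choose (k j + (Fin.cons p.1 b : Fin (r+1) → ℕ) j)
            ((Fin.cons p.1 b : Fin (r+1) → ℕ) j)
        = (k 0 + p.1).choose p.1 *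
            ((∑ j, k (Fin.succ j)) + r + p.2 - 1).choose p.2 := by
      intro p _
      rw [← ih p.2 hr' (fun j => k j.succ)]
      rw [Finset.mul_sum]
      refine Finset.sum_congr rfl fun b _ => ?_
      rw [Fin.prod_univ_succ]
      simp
    rw [Finset.sum_congr rfl key]
    set K := ∑ j : Fin r, k (Fin.succ j) with hK
    have h1 : ∀ p2, K + r + p2 - 1 = (K + r - 1) + p2 := by intro p2; omega
    have h2 : ∀ p2 : ℕ, ((K + r - 1) + p2).choose p2 = ((K + r - 1) + p2).choose (K + r - 1) := by
      intro p2; rw [Nat.choose_symm_add, Nat.add_comm]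
    have h3 : ∀ p1 : ℕ, (k 0 + p1).choose p1 = (k 0 + p1).choose (k 0) := by
      intro p1; rw [Nat.choose_symm_add, Nat.add_comm]
    simp_rw [h1, h2, h3]
    rw [vand (k 0) (K + r - 1) m]
    rw [Fin.sum_univ_succ, ← hK]
    have e1 : k 0 + (K + r - 1) + 1 + m = k 0 + K + (r + 1) + m - 1 := by omega
    have e2 : k 0 + (K + r - 1) + 1 = (k 0 + K + (r + 1) + m - 1) - m := by omega
    rw [e1, e2, Nat.choose_symm (by omega)]
end

section
/- Let p be a prime, let 0 ≤ i < e and r ≥ 1 be integers, and let n be a natural number with n ≤ r·p^e − 1. Then the binomial coefficient C(r·p^e − 1 − n + p^i, p^i) is congruent to −n_i modulo p, where n_i = ⌊n/p^i⌋ mod p is the i-th digit of n in base p. (This is the congruence underlying Proposition 3.1(d): the operator s_{p^i} sends t^{(p^e−1)𝟙−a} to |a|_i · t^{(p^e−1)𝟙−a}.) -/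
/-- If `x + y + 1 = q * s` with `q > 0`, then `x/q + y/q + 1 = s` (no borrow). -/
lemma aux_div_add_div (q x y s : ℕ) (hq : 0 < q) (h : x + y + 1 = q * s) :
    x / q + y / q + 1 = s := by
  have hx := Nat.div_add_mod x q
  have hy := Nat.div_add_mod y q
  have hxm : x % q < q := Nat.mod_lt _ hq
  have hym : y % q < q := Nat.mod_lt _ hq
  have hdvd : q ∣ (x % q + y % q + 1) := by
    have h1 : (x % q + y % q + 1) % q = (x + y + 1) % q := by
      conv_rhs => rw [Nat.add_mod, Nat.add_mod x y]
      simp [Nat.add_mod]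
    have h2 : (x + y + 1) % q = 0 := by simp [h, Nat.mul_mod_right]
    exact Nat.dvd_of_mod_eq_zero (h1.trans h2)
  obtain ⟨c, hc⟩ := hdvd
  have hub : q * c < q * 2 := by omega
  have hlb : 0 < q * c := by omega
  have hc2 : c < 2 := Nat.lt_of_mul_lt_mul_left hub
  have hc0 : c ≠ 0 := by rintro rfl; omega
  have hc1 : c = 1 := by omega
  rw [hc1, mul_one] at hc
  have hsum : x % q + y % q + 1 = q := by omega
  have hmul : q * (x / q + y / q + 1) = q * s := by
    rw [Nat.mul_add, Nat.mul_add, Nat.mul_one]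
    omega
  exact Nat.eq_of_mul_eq_mul_left hq hmul

/-- The congruence underlying Proposition 3.1(d):
`C(r·p^e - 1 - n + p^i, p^i) ≡ -n_i (mod p)` where `n_i` is the `i`-th base-`p` digit of `n`. -/
theorem choose_congr_neg_digit (p : ℕ) (hp : p.Prime) (i e r : ℕ) (hie : i < e) (hr : 1 ≤ r)
    (n : ℕ) (hn : n ≤ r * p ^ e - 1) :
    ((Nat.choose (r * p ^ e - 1 - n + p ^ i) (p ^ i) : ZMod p))
      = -(((n / p ^ i) % p : ℕ) : ZMod p) := by
  haveI : Fact p.Prime := ⟨hp⟩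
  have hp0 : 0 < p := hp.pos
  set a := r * p ^ e - 1 - n with ha
  set M := a + p ^ i with hM
  have hq0 : 0 < p ^ i := Nat.pow_pos hp0
  -- Lucas step: choose M (p^i) ≡ M / p^i  [ZMOD p]
  have lucas := Choose.choose_modEq_choose_mul_prod_range_choose (p := p) (n := M) (k := p ^ i) i
  have hprod : ∀ j ∈ Finset.range i, Nat.choose (M / p ^ j % p) (p ^ i / p ^ j % p) = 1 := by
    intro j hj
    rw [Finset.mem_range] at hj
    have h1 : p ^ i / p ^ j = p ^ (i - j) := Nat.pow_div (le_of_lt hj) hp0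
    have hz : p ^ i / p ^ j % p = 0 := by
      obtain ⟨c, hc⟩ := dvd_pow_self p (show i - j ≠ 0 by omega)
      rw [h1, hc, Nat.mul_mod_right]
    rw [hz, Nat.choose_zero_right]
  have hd : p ^ i / p ^ i = 1 := Nat.div_self hq0
  rw [Finset.prod_congr rfl hprod, Finset.prod_const_one, Nat.cast_one, mul_one, hd,
    Nat.choose_one_right] at lucas
  -- convert to ZMod p
  have hz : ((Nat.choose M (p ^ i) : ℤ) : ZMod p) = (((M / p ^ i : ℕ) : ℤ) : ZMod p) :=
    (ZMod.intCast_eq_intCast_iff _ _ _).mpr lucas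
  rw [Int.cast_natCast, Int.cast_natCast] at hz
  rw [hz]
  -- arithmetic: M / p^i = a / p^i + 1 and a/p^i + n/p^i + 1 = r * p^(e-i)
  have hMq : M / p ^ i = a / p ^ i + 1 := by
    rw [hM, Nat.add_div_right _ hq0]
  have hpe : p ^ e = p ^ i * p ^ (e - i) := by
    rw [← pow_add]
    congr 1
    omega
  have hpe1 : 1 ≤ r * p ^ e := by
    have h0 : 0 < p ^ e := Nat.pow_pos hp0
    exact Nat.one_le_iff_ne_zero.mpr (by positivity)
  have hkey : a / p ^ i + n / p ^ i + 1 = r * p ^ (e - i) := by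
    apply aux_div_add_div (p ^ i) a n (r * p ^ (e - i)) hq0
    have han : a + n + 1 = r * p ^ e := by omega
    rw [han, hpe]
    ring
  rw [hMq, ZMod.natCast_mod]
  have hcast : ((a / p ^ i + n / p ^ i + 1 : ℕ) : ZMod p) = ((r * p ^ (e - i) : ℕ) : ZMod p) := by
    rw [hkey]
  push_cast at hcast
  have hzero : ((p : ZMod p)) ^ (e - i) = 0 := by
    rw [ZMod.natCast_self p]
    exact zero_pow (by omega)
  rw [hzero, mul_zero] at hcast
  push_cast
  linear_combination hcast
end

section
/- Let R be a commutative ring and M an R-module with a basis (δ_ν) indexed by the r-tuples ν of natural numbers. For each natural number n, let F_n ⊆ M be the R-submodule spanned by the basis elements δ_ν with ν_1 + ⋯ + ν_r > n. Suppose (q_ν) is a family of elements of M, indexed by the same r-tuples, such that q_ν − δ_ν ∈ F_{ν_1 + ⋯ + ν_r} for every ν. Then the family (q_ν) is linearly independent over R. (Lemma 3.5.) -/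
/-- Lemma 3.5: if `M` has a basis `(δ_ν)` indexed by `r`-tuples of naturals and `(q_ν)` is a
family with `q_ν ≡ δ_ν` modulo the span of the basis vectors of higher total degree, then the
`q_ν` are linearly independent. -/
theorem linearIndependent_of_unitriangular (R : Type*) [CommRing R]
    (M : Type*) [AddCommGroup M] [Module R M]
    (r : ℕ) (hr : 1 ≤ r) (b : Module.Basis (Fin r → ℕ) R M)
    (F : ℕ → Submodule R M)
    (hF : ∀ n, F n = Submodule.span R {x | ∃ ν : Fin r → ℕ, (∑ j, ν j) > n ∧ x = b ν})
    (q : (Fin r → ℕ) → M)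
    (hq : ∀ ν : Fin r → ℕ, q ν - b ν ∈ F (∑ j, ν j)) :
    LinearIndependent R q := by
  -- key: if deg ν₀ ≤ n and x ∈ F n, then the ν₀-coordinate of x vanishes
  have key : ∀ (n : ℕ) (ν₀ : Fin r → ℕ), (∑ j, ν₀ j) ≤ n →
      ∀ x ∈ F n, b.repr x ν₀ = 0 := by
    intro n ν₀ h x hx
    rw [hF] at hx
    have hle : Submodule.span R {x | ∃ ν : Fin r → ℕ, (∑ j, ν j) > n ∧ x = b ν} ≤
        LinearMap.ker ((Finsupp.lapply ν₀ : ((Fin r → ℕ) →₀ R) →ₗ[R] R).comp (b.repr : M →ₗ[R] ((Fin r → ℕ) →₀ R))) := by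
      rw [Submodule.span_le]
      rintro _ ⟨ν, hν, rfl⟩
      simp only [SetLike.mem_coe, LinearMap.mem_ker, LinearMap.comp_apply,
        LinearEquiv.coe_coe, Finsupp.lapply_apply, Module.Basis.repr_self]
      rw [Finsupp.single_apply, if_neg]
      rintro rfl
      omega
    exact hle hx
  rw [linearIndependent_iff]
  intro l hl
  by_contra hne
  obtain ⟨ν₀, hν₀, hmin⟩ := l.support.exists_min_image (fun ν => ∑ j, ν j)
    (Finsupp.support_nonempty_iff.mpr hne)
  have hrepr : ∀ ν ∈ l.support, b.repr (q ν) ν₀ = if ν = ν₀ then 1 else 0 := by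
    intro ν hν
    have h1 : b.repr (q ν - b ν) ν₀ = 0 := key _ _ (hmin ν hν) _ (hq ν)
    have : b.repr (q ν) ν₀ = b.repr (b ν) ν₀ + b.repr (q ν - b ν) ν₀ := by
      rw [map_sub, Finsupp.sub_apply]; ring
    rw [this, h1, add_zero, Module.Basis.repr_self, Finsupp.single_apply]
  have hzero : b.repr (Finsupp.linearCombination R q l) ν₀ = l ν₀ := by
    rw [Finsupp.linearCombination_apply, Finsupp.sum, map_sum, Finsupp.finset_sum_apply]
    rw [Finset.sum_congr rfl (fun ν hν => by
      rw [map_smul, Finsupp.smul_apply, hrepr ν hν])]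
    simp [Finset.sum_ite_eq' l.support ν₀, hν₀]
  rw [hl] at hzero
  simp at hzero
  exact (Finsupp.mem_support_iff.mp hν₀) hzero.symm
end

section
/- Let p be a prime, M a module over 𝔽_p = ℤ/pℤ, and f_0, …, f_{e−1} pairwise commuting 𝔽_p-linear endomorphisms of M satisfying f_i^p = f_i for each i. For each α = (α_0, …, α_{e−1}) ∈ 𝔽_p^e let M_α = ⋂_{i<e} ker(f_i − α_i·id) be the corresponding simultaneous eigenspace. Then M is the internal direct sum of the submodules M_α over all α ∈ 𝔽_p^e; that is, the M_α are independent and their sum is all of M. (Proposition 3.1(g) / Lemma 5.3.) -/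
/-!
Over `𝔽_q` one has `X ^ q - X = ∏_c (X - c)`, so if `b ^ q = b` the Lagrange basis polynomials
`L_c` of the nodes `𝔽_q` give a partition of unity `∑_c L_c(b) = 1` with `(b - c) L_c(b) = 0`.
For commuting `f_i` the products `∏_i L_{α_i}(f_i)` again form a partition of unity, and the
`α`-th term maps `M` into the simultaneous eigenspace `M_α`; hence the `M_α` span `M`.
Their independence is that of simultaneous generalized eigenspaces of commuting endomorphisms.
-/

open Polynomial Lagrange Finset

section LagrangeBasis

variable {K : Type*} [Field K] [Fintype K] {A : Type*} [Ring A] [Algebra K A]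

theorem Lagrange.nodal_univ_id_eq_X_pow_card_sub_X :
    nodal (univ : Finset K) id = X ^ Fintype.card K - X := by
  have hq := Fintype.one_lt_card (α := K)
  have hmonic : (X ^ Fintype.card K - X : K[X]).Monic :=
    monic_X_pow_sub (by rw [degree_X]; exact_mod_cast hq)
  have := prod_multiset_X_sub_C_of_monic_of_roots_card_eq hmonic <| by
    rw [FiniteField.roots_X_pow_card_sub_X, FiniteField.X_pow_card_sub_X_natDegree_eq K hq]; rfl
  rwa [FiniteField.roots_X_pow_card_sub_X] at this

theorem Lagrange.aeval_nodal_univ_id_eq_zero {b : A} (hb : b ^ Fintype.card K = b) :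
    aeval b (nodal (univ : Finset K) id) = 0 := by
  rw [nodal_univ_id_eq_X_pow_card_sub_X, map_sub, map_pow, aeval_X, hb, sub_self]

variable [DecidableEq K]

theorem Lagrange.sum_aeval_basis_univ_id (b : A) :
    ∑ c : K, aeval b (Lagrange.basis univ id c) = 1 := by
  rw [← map_sum, sum_basis (Set.injOn_id _) univ_nonempty, map_one]

theorem Lagrange.sub_algebraMap_mul_aeval_basis_univ_id {b : A} (hb : b ^ Fintype.card K = b)
    (c : K) : (b - algebraMap K A c) * aeval b (Lagrange.basis univ id c) = 0 := by
  have hc := mem_univ c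
  have : (X - C c) * Lagrange.basis univ id c = C (nodalWeight univ id c) * nodal univ id := by
    rw [basis_eq_prod_sub_inv_mul_nodal_div hc, ← nodal_erase_eq_nodal_div hc,
      nodal_eq_mul_nodal_erase hc, id]
    ring
  simpa [aeval_nodal_univ_id_eq_zero hb] using congrArg (aeval b) this

variable {ι : Type*} [Fintype ι] {R : Type*} [CommRing R] [Algebra K R]

theorem Lagrange.sum_prod_aeval_basis_univ_id [DecidableEq ι] (b : ι → R) :
    ∑ α : ι → K, ∏ i, aeval (b i) (Lagrange.basis univ id (α i)) = 1 := by
  rw [← Fintype.prod_sum fun i c => aeval (b i) (Lagrange.basis univ id c)]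
  simp only [sum_aeval_basis_univ_id, prod_const_one]

theorem Lagrange.sub_algebraMap_mul_prod_aeval_basis_univ_id {b : ι → R}
    (hb : ∀ i, b i ^ Fintype.card K = b i) (α : ι → K) (i : ι) :
    (b i - algebraMap K R (α i)) * ∏ j, aeval (b j) (Lagrange.basis univ id (α j)) = 0 := by
  obtain ⟨r, hr⟩ := dvd_prod_of_mem (fun j => aeval (b j) (Lagrange.basis univ id (α j)))
    (mem_univ i)
  rw [hr, ← mul_assoc, sub_algebraMap_mul_aeval_basis_univ_id (hb i), zero_mul]

end LagrangeBasis

theorem Submodule.iSup_eq_top_of_sum_eq_one {R M κ : Type*} [Semiring R] [AddCommMonoid M]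
    [Module R M] [Fintype κ] {N : κ → Submodule R M} (E : κ → Module.End R M)
    (hE : ∑ k, E k = 1) (hEN : ∀ k, LinearMap.range (E k) ≤ N k) : ⨆ k, N k = ⊤ := by
  refine eq_top_iff.2 fun x _ => ?_
  have hx : x = ∑ k, E k x := by simpa using (LinearMap.congr_fun hE x).symm
  rw [hx]
  exact sum_mem fun k _ => mem_iSup_of_mem k (hEN k ⟨x, rfl⟩)

namespace Module.End

theorem iSupIndep_iInf_eigenspace_of_commute {R M ι : Type*} [CommRing R] [IsDomain R]
    [AddCommGroup M] [Module R M] [Module.IsTorsionFree R M] (f : ι → End R M)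
    (hcomm : ∀ i j, Commute (f i) (f j)) :
    iSupIndep fun α : ι → R => ⨅ i, (f i).eigenspace (α i) :=
  (independent_iInf_maxGenEigenspace_of_forall_mapsTo f fun i j φ =>
    mapsTo_maxGenEigenspace_of_comm (hcomm j i) φ).mono
    fun _ => iInf_mono fun _ => eigenspace_le_maxGenEigenspace

open scoped IsMulCommutative in
theorem iSup_iInf_eigenspace_eq_top_of_pow_card_eq_self {K M ι : Type*} [Field K] [Fintype K]
    [AddCommGroup M] [Module K M] [Fintype ι] (f : ι → End K M)
    (hcomm : ∀ i j, Commute (f i) (f j)) (hpow : ∀ i, f i ^ Fintype.card K = f i) :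
    ⨆ α : ι → K, ⨅ i, (f i).eigenspace (α i) = ⊤ := by
  classical
  let A := Algebra.adjoin K (Set.range f)
  have : IsMulCommutative A := Algebra.isMulCommutative_adjoin K <| by
    rintro _ ⟨i, rfl⟩ _ ⟨j, rfl⟩; exact hcomm i j
  let g : ι → A := fun i => ⟨f i, Algebra.subset_adjoin ⟨i, rfl⟩⟩
  have hg : ∀ i, g i ^ Fintype.card K = g i := fun i => Subtype.ext (hpow i)
  refine Submodule.iSup_eq_top_of_sum_eq_one
    (fun α => A.val (∏ i, aeval (g i) (Lagrange.basis univ id (α i)))) ?_ fun α => ?_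
  · rw [← map_sum, sum_prod_aeval_basis_univ_id, map_one]
  refine le_iInf fun i => ?_
  have hval : A.val (g i - algebraMap K A (α i)) = f i - α i • 1 := by
    simp [g, Algebra.algebraMap_eq_smul_one]
  rw [eigenspace_def, LinearMap.range_le_ker_iff, ← hval, ← mul_eq_comp, ← map_mul,
    sub_algebraMap_mul_prod_aeval_basis_univ_id hg, map_zero]

end Module.End

/-- Proposition 3.1(g) / Lemma 5.3: if `f_0, …, f_{e-1}` are pairwise commuting `𝔽_p`-linear
endomorphisms of `M` with `f_i^p = f_i`, then `M` is the internal direct sum of the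
simultaneous eigenspaces `M_α = ⋂_i ker (f_i - α_i)` over `α ∈ 𝔽_p^e`. -/
theorem multiEigenspace_decomposition (p : ℕ) (hp : p.Prime) (e : ℕ)
    (M : Type*) [AddCommGroup M] [Module (ZMod p) M]
    (f : Fin e → Module.End (ZMod p) M)
    (hcomm : ∀ i j, f i * f j = f j * f i)
    (hpow : ∀ i, f i ^ p = f i) :
    (iSupIndep fun α : Fin e → ZMod p =>
      ⨅ i, LinearMap.ker (f i - α i • (1 : Module.End (ZMod p) M))) ∧
    (⨆ α : Fin e → ZMod p,
      ⨅ i, LinearMap.ker (f i - α i • (1 : Module.End (ZMod p) M))) = ⊤ := by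
  have := Fact.mk hp
  simp only [← Module.End.eigenspace_def]
  exact ⟨Module.End.iSupIndep_iInf_eigenspace_of_commute f hcomm,
    Module.End.iSup_iInf_eigenspace_eq_top_of_pow_card_eq_self f hcomm
      (by simpa only [ZMod.card] using hpow)⟩
end

section
/- Let p be a prime and α ∈ ℤ_p with digit sequence (α_i). Then (α_i) is (purely) periodic — i.e. there exists d ≥ 1 with α_{i+d} = α_i for all i ≥ 0 — if and only if there exist integers d ≥ 1 and a with 0 ≤ a ≤ p^d − 1 such that (p^d − 1)·α = −a in ℤ_p; equivalently, if and only if α equals (the image in ℤ_p of) a rational number q with denominator prime to p and −1 ≤ q ≤ 0. (Part of Lemma 7.1.) -/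
lemma padic_nat_eq_of_dvd (p : ℕ) [Fact p.Prime] {n x y : ℕ} (hx : x < p ^ n)
    (hy : y < p ^ n) (h : ((p : ℤ_[p])) ^ n ∣ ((x : ℤ_[p]) - (y : ℤ_[p]))) : x = y := by
  have h2 : ((x : ℤ_[p]) - (y : ℤ_[p])) = (((x : ℤ) - (y : ℤ) : ℤ) : ℤ_[p]) := by push_cast; ring
  rw [h2, PadicInt.pow_p_dvd_int_iff] at h
  have hx' : (x : ℤ) < (p : ℤ) ^ n := by exact_mod_cast hx
  have hy' : (y : ℤ) < (p : ℤ) ^ n := by exact_mod_cast hy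
  have h0 : (x : ℤ) - y = 0 := Int.eq_zero_of_abs_lt_dvd (by exact_mod_cast h)
    (abs_sub_lt_iff.mpr ⟨by omega, by omega⟩)
  omega

lemma padic_zero_of_forall_dvd (p : ℕ) [hp : Fact p.Prime] (x : ℤ_[p])
    (h : ∀ n : ℕ, (p : ℤ_[p]) ^ n ∣ x) : x = 0 := by
  have hnorm : ∀ n : ℕ, ‖x‖ ≤ ((p : ℝ))⁻¹ ^ n := by
    intro n
    obtain ⟨c, hc⟩ := h n
    rw [hc]
    calc ‖(p:ℤ_[p])^n * c‖ ≤ ‖(p:ℤ_[p])^n‖ * ‖c‖ := norm_mul_le _ _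
      _ ≤ ‖(p:ℤ_[p])^n‖ * 1 := mul_le_mul_of_nonneg_left (PadicInt.norm_le_one c) (norm_nonneg _)
      _ = ((p:ℝ))⁻¹ ^ n := by rw [mul_one, norm_pow, PadicInt.norm_p, inv_pow]
  have hp1 : (1:ℝ) < (p:ℝ) := by exact_mod_cast hp.out.one_lt
  have htend : Filter.Tendsto (fun n : ℕ => ((p:ℝ))⁻¹ ^ n) Filter.atTop (nhds 0) :=
    tendsto_pow_atTop_nhds_zero_of_lt_one (by positivity) (inv_lt_one_of_one_lt₀ hp1)
  have h0 : ‖x‖ ≤ 0 := ge_of_tendsto' htend hnorm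
  exact norm_eq_zero.mp (le_antisymm h0 (norm_nonneg x))

lemma digitSum_lt (p : ℕ) (dig : ℕ → ℕ) (hlt : ∀ i, dig i < p) (n : ℕ) :
    (∑ i ∈ Finset.range n, dig i * p ^ i) < p ^ n := by
  have hp1 : 1 ≤ p := Nat.one_le_iff_ne_zero.mpr (by intro h; subst h; exact absurd (hlt 0) (by omega))
  induction n with
  | zero => simp
  | succ m ih =>
    rw [Finset.sum_range_succ, pow_succ]
    have h1 : dig m * p ^ m ≤ (p - 1) * p ^ m := Nat.mul_le_mul_right _ (by have := hlt m; omega)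
    have h2 : (p - 1) * p ^ m + p ^ m = p ^ m * p := by
      have : p - 1 + 1 = p := Nat.succ_pred_eq_of_pos hp1
      calc (p - 1) * p ^ m + p ^ m = (p - 1 + 1) * p ^ m := by ring
        _ = p ^ m * p := by rw [this]; ring
    omega

lemma digitSum_digit (p : ℕ) (dig : ℕ → ℕ) (hlt : ∀ i, dig i < p) (i k : ℕ) :
    (∑ j ∈ Finset.range (i + 1 + k), dig j * p ^ j) / p ^ i % p = dig i := by
  have hp1 : 1 ≤ p := Nat.one_le_iff_ne_zero.mpr (by intro h; subst h; exact absurd (hlt 0) (by omega))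
  have hpi : 0 < p ^ i := pow_pos hp1 i
  induction k with
  | zero =>
    rw [Nat.add_zero, Finset.sum_range_succ, Nat.add_mul_div_right _ _ hpi,
      Nat.div_eq_of_lt (digitSum_lt p dig hlt i), Nat.zero_add, Nat.mod_eq_of_lt (hlt i)]
  | succ k ih =>
    have hm : i + 1 + (k + 1) = (i + 1 + k) + 1 := by omega
    rw [hm, Finset.sum_range_succ]
    set m := i + 1 + k with hmdef
    have hme : dig m * p ^ m = dig m * p ^ k * p * p ^ i := by
      rw [show m = i + (k + 1) by omega, pow_add, pow_succ]; ring
    rw [hme, Nat.add_mul_div_right _ _ hpi, Nat.add_mul_mod_self_right]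
    exact ih


/-- Part of Lemma 7.1: the digit sequence of `α ∈ ℤ_p` is purely periodic iff
`(p^d - 1)·α = -a` for some `d ≥ 1` and `0 ≤ a ≤ p^d - 1`, iff `α` is (the image of) a
rational number `q` with denominator prime to `p` and `-1 ≤ q ≤ 0`. -/
theorem periodic_digits_iff (p : ℕ) [hp : Fact p.Prime] (α : ℤ_[p])
    (dig : ℕ → ℕ) (hdig_lt : ∀ i, dig i < p)
    (hdig : ∀ n : ℕ, ((p : ℤ_[p]) ^ n) ∣
      (α - ∑ i ∈ Finset.range n, (dig i : ℤ_[p]) * (p : ℤ_[p]) ^ i)) :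
    ((∃ d : ℕ, 1 ≤ d ∧ ∀ i : ℕ, dig (i + d) = dig i) ↔
      ∃ d a : ℕ, 1 ≤ d ∧ a ≤ p ^ d - 1 ∧ ((p : ℤ_[p]) ^ d - 1) * α = -(a : ℤ_[p])) ∧
    ((∃ d : ℕ, 1 ≤ d ∧ ∀ i : ℕ, dig (i + d) = dig i) ↔
      ∃ q : ℚ, ¬ (p ∣ q.den) ∧ -1 ≤ q ∧ q ≤ 0 ∧ (α : ℚ_[p]) = (q : ℚ_[p])) := by
  have hp2 : 2 ≤ p := hp.out.two_le
  set S : ℕ → ℕ := fun n => ∑ i ∈ Finset.range n, dig i * p ^ i with hSdef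
  have hSlt : ∀ n, S n < p ^ n := digitSum_lt p dig hdig_lt
  have hSc : ∀ n : ℕ, (p : ℤ_[p]) ^ n ∣ (α - (S n : ℤ_[p])) := by
    intro n
    have h := hdig n
    have hc : ((S n : ℕ) : ℤ_[p]) = ∑ i ∈ Finset.range n, (dig i : ℤ_[p]) * (p : ℤ_[p]) ^ i := by
      rw [hSdef]; push_cast; rfl
    rwa [hc]
  have hdigit : ∀ i n, i < n → S n / p ^ i % p = dig i := by
    intro i n h
    obtain ⟨k, rfl⟩ : ∃ k, n = i + 1 + k := ⟨n - (i + 1), by omega⟩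
    exact digitSum_digit p dig hdig_lt i k
  -- P → E
  have hPE : (∃ d : ℕ, 1 ≤ d ∧ ∀ i : ℕ, dig (i + d) = dig i) →
      ∃ d a : ℕ, 1 ≤ d ∧ a ≤ p ^ d - 1 ∧ ((p : ℤ_[p]) ^ d - 1) * α = -(a : ℤ_[p]) := by
    rintro ⟨d, hd, hper⟩
    refine ⟨d, S d, hd, by have := hSlt d; omega, ?_⟩
    have hperN : ∀ n i, dig (i + n * d) = dig i := by
      intro n
      induction n with
      | zero => simp
      | succ m ih =>
        intro i
        have h1 : i + (m + 1) * d = (i + m * d) + d := by ring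
        rw [h1, hper, ih]
    have hstep : ∀ m : ℕ, S (m * d + d) = S (m * d) + p ^ (m * d) * S d := by
      intro m
      have h1 : S (m * d + d) =
          S (m * d) + ∑ i ∈ Finset.range d, dig (m * d + i) * p ^ (m * d + i) :=
        Finset.sum_range_add (fun j => dig j * p ^ j) (m * d) d
      rw [h1]
      congr 1
      rw [Finset.mul_sum]
      refine Finset.sum_congr rfl fun i _ => ?_
      rw [add_comm (m * d) i, hperN, pow_add]
      ring
    have hgeom : ∀ n : ℕ, ((S (n * d) : ℤ_[p])) =
        (S d : ℤ_[p]) * ∑ k ∈ Finset.range n, ((p : ℤ_[p]) ^ d) ^ k := by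
      intro n
      induction n with
      | zero => simp [hSdef]
      | succ m ih =>
        have h1 : (m + 1) * d = m * d + d := by ring
        rw [h1, hstep m, Finset.sum_range_succ, Nat.cast_add, Nat.cast_mul, ih]
        push_cast
        rw [← pow_mul]
        ring
    have hkey : ((p : ℤ_[p]) ^ d - 1) * α + (S d : ℤ_[p]) = 0 := by
      apply padic_zero_of_forall_dvd
      intro n
      have hdvd1 : (p : ℤ_[p]) ^ n ∣ (p : ℤ_[p]) ^ (n * d) :=
        pow_dvd_pow _ (Nat.le_mul_of_pos_right n (by omega))
      refine dvd_trans hdvd1 ?_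
      have hrw : ((p : ℤ_[p]) ^ d - 1) * α + (S d : ℤ_[p]) =
          ((p : ℤ_[p]) ^ d - 1) * (α - (S (n * d) : ℤ_[p])) +
            (S d : ℤ_[p]) * ((p : ℤ_[p]) ^ d) ^ n := by
        linear_combination ((p : ℤ_[p]) ^ d - 1) * hgeom n +
          (S d : ℤ_[p]) * geom_sum_mul ((p : ℤ_[p]) ^ d) n
      rw [hrw]
      refine dvd_add ((hSc (n * d)).mul_left _) ?_
      have h2 : ((p : ℤ_[p]) ^ d) ^ n = (p : ℤ_[p]) ^ (n * d) := by
        rw [← pow_mul, Nat.mul_comm]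
      rw [h2]
      exact Dvd.intro_left _ rfl
    linear_combination hkey
  -- E → P
  have hEP : (∃ d a : ℕ, 1 ≤ d ∧ a ≤ p ^ d - 1 ∧ ((p : ℤ_[p]) ^ d - 1) * α = -(a : ℤ_[p])) →
      (∃ d : ℕ, 1 ≤ d ∧ ∀ i : ℕ, dig (i + d) = dig i) := by
    rintro ⟨d, a, hd, ha, heq⟩
    have hpd : 2 ≤ p ^ d :=
      le_trans hp2 (Nat.le_self_pow (by omega) p)
    have halt : a < p ^ d := by omega
    have hα : α = (a : ℤ_[p]) + (p : ℤ_[p]) ^ d * α := by linear_combination -heq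
    have hS' : ∀ n : ℕ, S (n + d) = a + p ^ d * S n := by
      intro n
      have hlt2 : a + p ^ d * S n < p ^ (n + d) := by
        calc a + p ^ d * S n < p ^ d + p ^ d * S n := by omega
          _ = p ^ d * (S n + 1) := by ring
          _ ≤ p ^ d * p ^ n := Nat.mul_le_mul_left _ (hSlt n)
          _ = p ^ (n + d) := by rw [← pow_add, Nat.add_comm]
      apply padic_nat_eq_of_dvd p (hSlt (n + d)) hlt2
      have h1 : α - ((a + p ^ d * S n : ℕ) : ℤ_[p]) = (p : ℤ_[p]) ^ d * (α - (S n : ℤ_[p])) := by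
        push_cast
        linear_combination hα
      have h2 : (p : ℤ_[p]) ^ (n + d) ∣ (p : ℤ_[p]) ^ d * (α - (S n : ℤ_[p])) := by
        rw [pow_add, mul_comm ((p : ℤ_[p]) ^ n)]
        exact mul_dvd_mul_left _ (hSc n)
      have h3 : (S (n + d) : ℤ_[p]) - ((a + p ^ d * S n : ℕ) : ℤ_[p]) =
          (α - ((a + p ^ d * S n : ℕ) : ℤ_[p])) - (α - (S (n + d) : ℤ_[p])) := by ring
      rw [h3, h1]
      exact dvd_sub h2 (hSc (n + d))
    refine ⟨d, hd, fun i => ?_⟩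
    have h1 : dig (i + d) = S ((i + 1) + d) / p ^ (i + d) % p :=
      (hdigit (i + d) ((i + 1) + d) (by omega)).symm
    rw [hS' (i + 1)] at h1
    have h2 : (a + p ^ d * S (i + 1)) / p ^ (i + d) = S (i + 1) / p ^ i := by
      rw [show p ^ (i + d) = p ^ d * p ^ i by rw [← pow_add, Nat.add_comm],
        ← Nat.div_div_eq_div_mul, Nat.add_mul_div_left _ _ (by positivity : 0 < p ^ d),
        Nat.div_eq_of_lt halt, Nat.zero_add]
    rw [h2] at h1
    rw [h1, hdigit i (i + 1) (by omega)]
  -- E → Q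
  have hEQ : (∃ d a : ℕ, 1 ≤ d ∧ a ≤ p ^ d - 1 ∧ ((p : ℤ_[p]) ^ d - 1) * α = -(a : ℤ_[p])) →
      (∃ q : ℚ, ¬ (p ∣ q.den) ∧ -1 ≤ q ∧ q ≤ 0 ∧ (α : ℚ_[p]) = (q : ℚ_[p])) := by
    rintro ⟨d, a, hd, ha, heq⟩
    have hpd : 2 ≤ p ^ d := le_trans hp2 (Nat.le_self_pow (by omega) p)
    set m : ℕ := p ^ d - 1 with hm
    have hm1 : 1 ≤ m := by omega
    refine ⟨-(a : ℚ) / (m : ℚ), ?_, ?_, ?_, ?_⟩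
    · intro hdvd
      have hden : ((-(a : ℚ) / (m : ℚ)).den : ℤ) ∣ (m : ℤ) := by
        have h := Rat.den_dvd (-(a : ℤ)) (m : ℤ)
        rw [Rat.divInt_eq_div] at h
        push_cast at h ⊢
        exact h
      have hden' : (-(a : ℚ) / (m : ℚ)).den ∣ m := Int.ofNat_dvd.mp hden
      have hpm : p ∣ m := dvd_trans hdvd hden'
      have hpm1 : p ∣ m + 1 := by
        rw [hm, Nat.sub_add_cancel (by omega)]
        exact dvd_pow_self p (by omega)
      have h1 : p ∣ 1 := by simpa using Nat.dvd_sub hpm1 hpm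
      have := Nat.dvd_one.mp h1
      omega
    · rw [neg_div, neg_le, neg_neg]
      rw [div_le_one (by exact_mod_cast hm1 : (0:ℚ) < m)]
      exact_mod_cast ha
    · apply div_nonpos_of_nonpos_of_nonneg
      · simp
      · positivity
    · have hmp : ((m : ℚ_[p])) ≠ 0 := Nat.cast_ne_zero.mpr (by omega)
      have heqQ : ((p : ℚ_[p]) ^ d - 1) * (α : ℚ_[p]) = -(a : ℚ_[p]) := by
        have h := congrArg (fun x : ℤ_[p] => (x : ℚ_[p])) heq
        push_cast at h
        exact h
      have hmc : ((m : ℚ_[p])) = (p : ℚ_[p]) ^ d - 1 := by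
        rw [hm, Nat.cast_sub (by omega : 1 ≤ p ^ d)]
        push_cast
        ring
      rw [Rat.cast_div, Rat.cast_neg, Rat.cast_natCast, Rat.cast_natCast,
        eq_div_iff hmp, hmc]
      linear_combination heqQ
  -- Q → E
  have hQE : (∃ q : ℚ, ¬ (p ∣ q.den) ∧ -1 ≤ q ∧ q ≤ 0 ∧ (α : ℚ_[p]) = (q : ℚ_[p])) →
      (∃ d a : ℕ, 1 ≤ d ∧ a ≤ p ^ d - 1 ∧ ((p : ℤ_[p]) ^ d - 1) * α = -(a : ℤ_[p])) := by
    rintro ⟨q, hden, hq1, hq0, hαq⟩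
    have hdenpos : 0 < q.den := q.pos
    set d : ℕ := Nat.totient q.den with hd
    have hd1 : 1 ≤ d := Nat.totient_pos.mpr hdenpos
    have hcop : Nat.Coprime p q.den := (Nat.Prime.coprime_iff_not_dvd hp.out).mpr hden
    have hmod : p ^ d ≡ 1 [MOD q.den] := Nat.ModEq.pow_totient hcop
    have hpd : 1 ≤ p ^ d := Nat.one_le_pow _ _ (by omega)
    have hdvd : q.den ∣ p ^ d - 1 := (Nat.modEq_iff_dvd' hpd).mp hmod.symm
    set k : ℕ := (p ^ d - 1) / q.den with hk
    have hkm : q.den * k = p ^ d - 1 := Nat.mul_div_cancel' hdvd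
    have hnum0 : q.num ≤ 0 := Rat.num_nonpos.mpr hq0
    have hnumge : -(q.den : ℤ) ≤ q.num := by
      have h := mul_le_mul_of_nonneg_right hq1 (show (0:ℚ) ≤ (q.den : ℚ) by positivity)
      rw [Rat.mul_den_eq_num] at h
      have h2 : (-(q.den : ℤ) : ℚ) ≤ (q.num : ℚ) := by push_cast; linarith
      exact_mod_cast h2
    set a : ℕ := (-q.num).toNat * k with haa
    refine ⟨d, a, hd1, ?_, ?_⟩
    · have h1 : (-q.num).toNat ≤ q.den := Int.toNat_le.mpr (by omega)
      calc a ≤ q.den * k := Nat.mul_le_mul_right _ h1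
        _ = p ^ d - 1 := hkm
    · have hca : (a : ℚ) = -(q.num : ℚ) * (k : ℚ) := by
        have h1 : ((-q.num).toNat : ℤ) = -q.num := Int.toNat_of_nonneg (by omega)
        have h2 : (a : ℤ) = -q.num * (k : ℤ) := by rw [haa]; push_cast; rw [h1]
        exact_mod_cast congrArg (fun x : ℤ => (x : ℚ)) h2
      have hcm : ((q.den : ℚ)) * (k : ℚ) = (p : ℚ) ^ d - 1 := by
        have h := congrArg (fun x : ℕ => (x : ℚ)) hkm
        push_cast [Nat.cast_sub hpd] at h
        exact h
      have hrat : ((p : ℚ) ^ d - 1) * q = -(a : ℚ) := by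
        rw [hca, ← hcm]
        have hdq : (q.den : ℚ) * q = (q.num : ℚ) := by
          rw [mul_comm]; exact_mod_cast Rat.mul_den_eq_num q
        linear_combination (k : ℚ) * hdq
      have hZp : ((p : ℚ_[p]) ^ d - 1) * (α : ℚ_[p]) = -(a : ℚ_[p]) := by
        rw [hαq]
        have h := congrArg (fun x : ℚ => (x : ℚ_[p])) hrat
        push_cast at h
        exact h
      have hfin : ((((p : ℤ_[p]) ^ d - 1) * α : ℤ_[p]) : ℚ_[p]) = ((-(a : ℤ_[p]) : ℤ_[p]) : ℚ_[p]) := by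
        push_cast
        exact hZp
      exact Subtype.coe_injective hfin
  exact ⟨⟨hPE, hEP⟩, ⟨fun h => hEQ (hPE h), fun h => hEP (hQE h)⟩⟩
end

section
/- Let p be a prime, d ≥ 1 an integer, and l a natural number with 0 ≤ l ≤ p^d − 1. Let γ ∈ ℤ_p be the unique p-adic integer satisfying (p^d − 1)·γ = −l (γ exists and is unique since p^d − 1 is a unit in ℤ_p). Then for every integer e ≥ 1, γ_0 + p·γ_1 + ⋯ + p^{ed−1}·γ_{ed−1} = l·(1 + p^d + p^{2d} + ⋯ + p^{(e−1)d}), where (γ_i) are the p-adic digits of γ. (Lemma 7.2.) -/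
/-!
Multiplying by the unit `p^d - 1` and telescoping the geometric sum shows that
`γ ≡ l·(1 + p^d + ⋯ + p^{(e-1)d}) (mod p^{ed})`. The truncated digit expansion of `γ` satisfies
the same congruence, and both are naturals in `[0, p^{ed})`, so they coincide.
-/

open Finset

theorem Nat.sum_mul_pow_lt_pow {b n : ℕ} {f : ℕ → ℕ} (hf : ∀ i < n, f i < b) :
    ∑ i ∈ range n, f i * b ^ i < b ^ n := by
  induction n with
  | zero => simp
  | succ n ih =>
    rw [sum_range_succ, pow_succ]
    have hlt := ih fun i hi => hf i (by omega)
    have hfn : f n + 1 ≤ b := hf n (by omega)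
    have := Nat.mul_le_mul_right (b ^ n) hfn
    linarith [mul_comm (b ^ n) b]

theorem IsLocalRing.isUnit_pow_sub_one {R : Type*} [CommRing R] [IsLocalRing R] {x : R}
    (hx : x ∈ maximalIdeal R) {d : ℕ} (hd : d ≠ 0) : IsUnit (x ^ d - 1) := by
  have hxd : x ^ d ∈ maximalIdeal R := Ideal.pow_mem_of_mem _ hx d (Nat.pos_of_ne_zero hd)
  simpa using (isUnit_one_sub_self_of_mem_nonunits _ hxd).neg

theorem PadicInt.natCast_eq_of_pow_dvd_sub {p : ℕ} [Fact p.Prime] {n a b : ℕ} {x : ℤ_[p]}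
    (ha : a < p ^ n) (hb : b < p ^ n) (hxa : (p : ℤ_[p]) ^ n ∣ x - a)
    (hxb : (p : ℤ_[p]) ^ n ∣ x - b) : a = b := by
  have h : (p : ℤ_[p]) ^ n ∣ ((b - a : ℤ) : ℤ_[p]) := by
    simpa using dvd_sub hxa hxb
  rw [pow_p_dvd_int_iff] at h
  exact (Nat.modEq_iff_dvd.2 (by exact_mod_cast h)).eq_of_lt_of_lt ha hb

theorem sub_one_mul_sub_mul_geom_sum {R : Type*} [CommRing R] {x γ l : R}
    (h : (x - 1) * γ = -l) (e : ℕ) :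
    (x - 1) * (γ - l * ∑ j ∈ range e, x ^ j) = -(l * x ^ e) := by
  linear_combination (-l) * geom_sum_mul x e + h

/-- Lemma 7.2: if `(p^d - 1)·γ = -l` with `0 ≤ l ≤ p^d - 1`, then for every `e ≥ 1`,
`γ_0 + p·γ_1 + ⋯ + p^{ed-1}·γ_{ed-1} = l·(1 + p^d + ⋯ + p^{(e-1)d})`, where `(γ_i)` are
the `p`-adic digits of `γ`. -/
theorem digits_of_neg_frac (p : ℕ) [hp : Fact p.Prime] (d : ℕ) (hd : 1 ≤ d)
    (l : ℕ) (hl : l ≤ p ^ d - 1)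
    (γ : ℤ_[p]) (hγ : ((p : ℤ_[p]) ^ d - 1) * γ = -(l : ℤ_[p]))
    (dig : ℕ → ℕ) (hdig_lt : ∀ i, dig i < p)
    (hdig : ∀ n : ℕ, ((p : ℤ_[p]) ^ n) ∣
      (γ - ∑ i ∈ Finset.range n, (dig i : ℤ_[p]) * (p : ℤ_[p]) ^ i)) :
    ∀ e : ℕ, 1 ≤ e →
      ∑ i ∈ Finset.range (e * d), dig i * p ^ i = l * ∑ j ∈ Finset.range e, p ^ (d * j) := by
  intro e _
  have hl' : l < p ^ d := by
    have := Nat.one_le_pow d p hp.out.pos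
    omega
  have hpow : p ^ (e * d) = (p ^ d) ^ e := by rw [mul_comm, pow_mul]
  simp_rw [pow_mul, mul_sum]
  refine PadicInt.natCast_eq_of_pow_dvd_sub (x := γ)
    (Nat.sum_mul_pow_lt_pow fun i _ => hdig_lt i)
    (hpow ▸ Nat.sum_mul_pow_lt_pow fun _ _ => hl') ?_ ?_
  · push_cast
    exact hdig _
  · have hunit : IsUnit ((p : ℤ_[p]) ^ d - 1) :=
      IsLocalRing.isUnit_pow_sub_one PadicInt.p_nonunit (by omega)
    rw [← hunit.dvd_mul_left]
    push_cast
    rw [← mul_sum, sub_one_mul_sub_mul_geom_sum hγ, mul_comm e d, pow_mul]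
    exact (dvd_mul_left _ _).neg_right
end

section
/- Let p be a prime and α ∈ ℤ_p rational, i.e. there exist integers b, c with b not divisible by p and b·α = c in ℤ_p. Then there exist γ ∈ ℤ_p and an integer n such that: (i) there are integers d ≥ 1 and a with 0 ≤ a ≤ p^d − 1 and (p^d − 1)·γ = −a (so γ is rational with −1 ≤ γ ≤ 0); (ii) α = n + γ in ℤ_p; and (iii) the digit sequences of α and γ are eventually equal, i.e. there is N with α_i = γ_i for all i ≥ N. (Lemma 7.3.) -/
/-! Write `α = ∑_{i<m} α_i p^i + p^m x_m`. The tails satisfy `x_m = α_m + p x_{m+1}`, and from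
`b α = c` one gets by induction that `b x_m` is an integer of absolute value at most
`max |b| |c|`. So the tails take finitely many values, `x_{N+D} = x_N` for some `D ≥ 1`, and as
`x_m` determines both `α_m` and `x_{m+1}`, the tails are `D`-periodic from `N` on.
Take `γ = x_K` with `K = DN`: unrolling `D` steps gives `(p^D - 1) γ = -a`, where `a` has digits
`α_K, …, α_{K+D-1}`; the digits of `γ` are `α_{K+i}`, equal to `α_i` for `i ≥ N`; and
`α - γ = ∑_{i<K} α_i p^i + (p^K - 1) γ` is an integer because `p^D - 1 ∣ p^K - 1`. -/

open Finset

theorem sum_range_mul_pow_lt_pow {p : ℕ} (d : ℕ → ℕ) (hd : ∀ i, d i < p) (n : ℕ) :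
    ∑ i ∈ range n, d i * p ^ i < p ^ n := by
  induction n with
  | zero => simp
  | succ n ih =>
    calc ∑ i ∈ range (n + 1), d i * p ^ i < p ^ n + d n * p ^ n := by rw [sum_range_succ]; omega
      _ = (d n + 1) * p ^ n := by ring
      _ ≤ p * p ^ n := Nat.mul_le_mul_right _ (hd n)
      _ = p ^ (n + 1) := (pow_succ' p n).symm

theorem eq_add_mul_succ_of_sub_sum_eq_pow_mul {R : Type*} [CommRing R] [IsDomain R] {q : R}
    (hq : q ≠ 0) {α : R} {d x : ℕ → R}
    (hx : ∀ m, α - ∑ i ∈ range m, d i * q ^ i = q ^ m * x m) (m : ℕ) :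
    x m = d m + q * x (m + 1) := by
  apply mul_left_cancel₀ (pow_ne_zero m hq)
  have := hx (m + 1)
  rw [sum_range_succ, pow_succ] at this
  linear_combination this - hx m

theorem eq_sum_add_pow_mul_of_eq_add_mul {R : Type*} [CommSemiring R] {q : R} {d x : ℕ → R}
    (hrec : ∀ m, x m = d m + q * x (m + 1)) (m k : ℕ) :
    x m = ∑ i ∈ range k, d (m + i) * q ^ i + q ^ k * x (m + k) := by
  induction k with
  | zero => simp
  | succ k ih =>
    rw [ih, hrec (m + k), sum_range_succ, ← add_assoc m k 1]
    ring

theorem exists_add_eq_of_finite_range {α : Type*} {x : ℕ → α} (h : (Set.range x).Finite) :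
    ∃ N D, 0 < D ∧ x (N + D) = x N := by
  obtain ⟨m, n, hmn, hx⟩ := h.exists_lt_map_eq_of_forall_mem (f := x) Set.mem_range_self
  exact ⟨m, n - m, by omega, by rw [Nat.add_sub_cancel' hmn.le, hx]⟩

theorem pow_sub_one_mul_eq_neg_sum_of_eq_add_mul {R : Type*} [CommRing R] {q : R} {d x : ℕ → R}
    (hrec : ∀ m, x m = d m + q * x (m + 1)) {m D : ℕ} (h : x (m + D) = x m) :
    (q ^ D - 1) * x m = -∑ i ∈ range D, d (m + i) * q ^ i := by
  have := eq_sum_add_pow_mul_of_eq_add_mul hrec m D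
  rw [h] at this
  linear_combination -this

namespace PadicInt

variable {p : ℕ} [Fact p.Prime]

theorem natCast_p_ne_zero : (p : ℤ_[p]) ≠ 0 := by
  exact_mod_cast (Fact.out : p.Prime).ne_zero

theorem natCast_add_p_mul_inj {d d' : ℕ} (hd : d < p) (hd' : d' < p) {y y' : ℤ_[p]}
    (h : (d : ℤ_[p]) + p * y = d' + p * y') : d = d' ∧ y = y' := by
  have hdvd : (p : ℤ_[p]) ^ 1 ∣ ((d' - d : ℤ) : ℤ_[p]) :=
    ⟨y - y', by push_cast; linear_combination -h⟩
  rw [pow_p_dvd_int_iff, pow_one] at hdvd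
  have hdd : d = d' := by
    have := Int.eq_zero_of_abs_lt_dvd hdvd (by rw [abs_lt]; omega)
    omega
  subst hdd
  exact ⟨rfl, mul_left_cancel₀ natCast_p_ne_zero (add_left_cancel h)⟩

variable {dig : ℕ → ℕ} {x : ℕ → ℤ_[p]}

theorem digit_eq_and_tail_eq_of_eq (hlt : ∀ i, dig i < p)
    (hrec : ∀ m, x m = dig m + p * x (m + 1)) {m n : ℕ} (h : x m = x n) :
    dig m = dig n ∧ x (m + 1) = x (n + 1) :=
  natCast_add_p_mul_inj (hlt m) (hlt n) (by rw [← hrec, ← hrec, h])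

theorem periodic_of_add_eq (hlt : ∀ i, dig i < p)
    (hrec : ∀ m, x m = dig m + p * x (m + 1)) {N D : ℕ} (h : x (N + D) = x N) :
    Function.Periodic (fun i => x (N + i)) D := by
  intro i
  induction i with
  | zero => simpa using h
  | succ i ih =>
    have := (digit_eq_and_tail_eq_of_eq hlt hrec ih).2
    simpa only [Nat.add_right_comm _ D 1, ← add_assoc] using this

theorem exists_int_abs_le_eq_mul (hlt : ∀ i, dig i < p)
    (hrec : ∀ m, x m = dig m + p * x (m + 1)) {b c : ℤ} (h0 : (b : ℤ_[p]) * x 0 = c)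
    (m : ℕ) :
    ∃ t : ℤ, |t| ≤ max |b| |c| ∧ (t : ℤ_[p]) = b * x m := by
  induction m with
  | zero => exact ⟨c, le_max_right _ _, h0.symm⟩
  | succ m ih =>
    obtain ⟨t, ht, htx⟩ := ih
    have hdvd : (p : ℤ_[p]) ^ 1 ∣ ((t - b * dig m : ℤ) : ℤ_[p]) :=
      ⟨b * x (m + 1), by push_cast; rw [htx, hrec m]; ring⟩
    rw [pow_p_dvd_int_iff, pow_one] at hdvd
    obtain ⟨s, hs⟩ := hdvd
    have hp : (0 : ℤ) < p := by exact_mod_cast (Fact.out : p.Prime).pos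
    refine ⟨s, ?_, ?_⟩
    · have hb : |b| ≤ max |b| |c| := le_max_left _ _
      have hd : (dig m : ℤ) ≤ p - 1 := by have := hlt m; omega
      have : |(p : ℤ) * s| ≤ p * max |b| |c| :=
        calc |(p : ℤ) * s| = |t - b * dig m| := by rw [hs]
          _ ≤ |t| + |b| * dig m := by simpa [abs_mul] using abs_sub t (b * dig m)
          _ ≤ max |b| |c| + max |b| |c| * (p - 1) := by gcongr
          _ = p * max |b| |c| := by ring
      rw [abs_mul, abs_of_pos hp] at this
      exact le_of_mul_le_mul_left this hp
    · apply mul_left_cancel₀ natCast_p_ne_zero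
      rw [← Int.cast_natCast, ← Int.cast_mul, ← hs]
      push_cast
      rw [htx, hrec m]
      ring

theorem finite_range_of_rational (hlt : ∀ i, dig i < p)
    (hrec : ∀ m, x m = dig m + p * x (m + 1)) {b c : ℤ} (hb : b ≠ 0)
    (h0 : (b : ℤ_[p]) * x 0 = c) : (Set.range x).Finite := by
  have hfin : ((Int.cast : ℤ → ℤ_[p]) '' Set.Icc (-max |b| |c|) (max |b| |c|)).Finite :=
    (Set.finite_Icc _ _).image _
  have hb' : (b : ℤ_[p]) ≠ 0 := Int.cast_ne_zero.mpr hb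
  refine (hfin.preimage (mul_right_injective₀ hb').injOn).subset ?_
  rintro _ ⟨m, rfl⟩
  obtain ⟨t, ht, htx⟩ := exists_int_abs_le_eq_mul hlt hrec h0 m
  exact ⟨t, abs_le.mp ht, htx⟩

end PadicInt

/-- Lemma 7.3: if `α ∈ ℤ_p` is rational then there are `γ ∈ ℤ_p` rational with `-1 ≤ γ ≤ 0`
(i.e. `(p^d - 1)·γ = -a` for some `d ≥ 1`, `0 ≤ a ≤ p^d - 1`) and an integer `n` with
`α = n + γ`, such that the digit sequences of `α` and `γ` are eventually equal. -/
theorem exists_periodic_tail (p : ℕ) [hp : Fact p.Prime] (α : ℤ_[p])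
    (dig : ℕ → ℕ) (hdig_lt : ∀ i, dig i < p)
    (hdig : ∀ n : ℕ, ((p : ℤ_[p]) ^ n) ∣
      (α - ∑ i ∈ Finset.range n, (dig i : ℤ_[p]) * (p : ℤ_[p]) ^ i))
    (hrat : ∃ b c : ℤ, ¬ ((p : ℤ) ∣ b) ∧ (b : ℤ_[p]) * α = (c : ℤ_[p])) :
    ∃ (γ : ℤ_[p]) (n : ℤ),
      (∃ d a : ℕ, 1 ≤ d ∧ a ≤ p ^ d - 1 ∧ ((p : ℤ_[p]) ^ d - 1) * γ = -(a : ℤ_[p])) ∧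
      α = (n : ℤ_[p]) + γ ∧
      ∃ digγ : ℕ → ℕ, (∀ i, digγ i < p) ∧
        (∀ m : ℕ, ((p : ℤ_[p]) ^ m) ∣
          (γ - ∑ i ∈ Finset.range m, (digγ i : ℤ_[p]) * (p : ℤ_[p]) ^ i)) ∧
        ∃ N : ℕ, ∀ i : ℕ, N ≤ i → dig i = digγ i := by
  obtain ⟨b, c, hb, hbc⟩ := hrat
  choose x hx using hdig
  have hrec := eq_add_mul_succ_of_sub_sum_eq_pow_mul PadicInt.natCast_p_ne_zero hx
  have hx0 : x 0 = α := by simpa using (hx 0).symm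
  have hb0 : b ≠ 0 := by rintro rfl; exact hb (dvd_zero _)
  obtain ⟨N, D, hD, hND⟩ := exists_add_eq_of_finite_range <|
    PadicInt.finite_range_of_rational hdig_lt hrec hb0 (by rw [hx0, hbc])
  have hper := PadicInt.periodic_of_add_eq hdig_lt hrec hND
  set K := D * N with hK
  have hKN : N ≤ K := Nat.le_mul_of_pos_left N hD
  have hshift : ∀ i, N ≤ i → x (K + i) = x i := by
    intro i hi
    obtain ⟨j, rfl⟩ := Nat.exists_eq_add_of_le hi
    exact (congrArg x (by rw [hK, Nat.cast_id]; ring)).trans (hper.nat_mul N j)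
  set a := ∑ i ∈ range D, dig (K + i) * p ^ i with ha
  have hγ : ((p : ℤ_[p]) ^ D - 1) * x K = -(a : ℤ_[p]) := by
    have hKD : x (K + D) = x K := by
      have : x (N + (K - N + D)) = x (N + (K - N)) := hper (K - N)
      rwa [← add_assoc, Nat.add_sub_cancel' hKN] at this
    rw [ha]
    push_cast
    exact pow_sub_one_mul_eq_neg_sum_of_eq_add_mul hrec hKD
  obtain ⟨e, he⟩ := pow_one_sub_dvd_pow_mul_sub_one (p : ℤ) D N
  refine ⟨x K, (∑ i ∈ range K, (dig i : ℤ) * p ^ i) - e * a,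
    ⟨D, a, hD, Nat.le_sub_one_of_lt (sum_range_mul_pow_lt_pow _ (fun i => hdig_lt _) D), hγ⟩, ?_,
    fun i => dig (K + i), fun i => hdig_lt _,
    fun m => ⟨x (K + m), by rw [eq_sum_add_pow_mul_of_eq_add_mul hrec K m]; ring⟩,
    N, fun i hi => (PadicInt.digit_eq_and_tail_eq_of_eq hdig_lt hrec (hshift i hi).symm).1⟩
  have he' := congrArg (Int.cast : ℤ → ℤ_[p]) he
  push_cast at he' ⊢
  linear_combination hx K + x K * he' + e * hγ
end
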